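/- For all natural numbers j ≥ 1 and k ≥ 0, the series ∑_{r=1}^∞ arctan( F_{2j}²·L_{4jr+2k} / F_{4jr+2k}² ) converges and its sum equals arctan( F_{2j} / F_{2j+2k} ). -/

import Mathlib

def lucas : ℕ → ℕ
  | 0 => 2
  | 1 => 1
  | n + 2 => lucas (n + 1) + lucas n

/-!
Put `t n = arctan (F_{2j} / F_{4jn+2j+2k})`. The subtraction formula for `arctan` turns
`t r - t (r+1)` into the `r`-th term of the series, once one knows, for even `a` and `b`,
Catalan's identity `F_{a+2b} F_a + F_b² = F_{a+b}²` and `F_{a+2b} - F_a = F_b L_{a+b}`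
(both from Binet's formulas). Since `t` decreases to `0`, the series telescopes to `t 0`.
-/

open Filter Topology Real goldenRatio

theorem coe_lucas_eq (n : ℕ) : (lucas n : ℝ) = φ ^ n + ψ ^ n := by
  induction n using Nat.twoStepInduction with
  | zero => norm_num [lucas]
  | one => simp [lucas, goldenRatio_add_goldenConj]
  | more n ih₁ ih₂ =>
    rw [lucas, Nat.cast_add, ih₁, ih₂]
    linear_combination -φ ^ n * goldenRatio_sq - ψ ^ n * goldenConj_sq

theorem goldenRatio_pow_mul_goldenConj_pow (n : ℕ) : φ ^ n * ψ ^ n = (-1) ^ n := by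
  rw [← mul_pow, goldenRatio_mul_goldenConj]

theorem fib_catalan (a b : ℕ) :
    (Nat.fib (a + 2 * b) * Nat.fib a : ℤ) + (-1) ^ a * Nat.fib b ^ 2 = Nat.fib (a + b) ^ 2 := by
  suffices (Nat.fib (a + 2 * b) * Nat.fib a : ℝ) + (-1) ^ a * Nat.fib b ^ 2 =
      Nat.fib (a + b) ^ 2 by exact_mod_cast this
  simp only [coe_fib_eq]
  field_simp
  linear_combination (-(φ ^ b - ψ ^ b) ^ 2) * goldenRatio_pow_mul_goldenConj_pow a

theorem fib_add_two_mul_sub_neg_one_pow_mul_fib (a b : ℕ) :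
    (Nat.fib (a + 2 * b) : ℤ) - (-1) ^ b * Nat.fib a = Nat.fib b * lucas (a + b) := by
  suffices (Nat.fib (a + 2 * b) : ℝ) - (-1) ^ b * Nat.fib a = Nat.fib b * lucas (a + b) by
    exact_mod_cast this
  simp only [coe_fib_eq, coe_lucas_eq]
  field_simp
  linear_combination (φ ^ a - ψ ^ a) * goldenRatio_pow_mul_goldenConj_pow b

theorem Real.arctan_sub {x y : ℝ} (h : -1 < x * y) :
    arctan x - arctan y = arctan ((x - y) / (1 + x * y)) := by
  rw [sub_eq_add_neg, ← arctan_neg, arctan_add (by linarith)]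
  ring_nf

theorem arctan_div_sub_arctan_div {a b : ℝ} (c : ℝ) (ha : 0 < a) (hb : 0 < b) :
    arctan (c / a) - arctan (c / b) = arctan (c * (b - a) / (a * b + c ^ 2)) := by
  have : 0 ≤ c / a * (c / b) := by rw [div_mul_div_comm, ← sq]; positivity
  rw [Real.arctan_sub (by linarith)]
  congr 1
  field_simp

theorem arctan_fib_div_sub_arctan_fib_div {a b : ℕ} (ha : 0 < a) (ha' : Even a) (hb : Even b) :
    arctan (Nat.fib b / Nat.fib a) - arctan (Nat.fib b / Nat.fib (a + 2 * b)) =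
      arctan (Nat.fib b ^ 2 * lucas (a + b) / Nat.fib (a + b) ^ 2) := by
  have catalan : (Nat.fib (a + 2 * b) * Nat.fib a : ℝ) + Nat.fib b ^ 2 = Nat.fib (a + b) ^ 2 := by
    have := fib_catalan a b
    rw [ha'.neg_one_pow, one_mul] at this
    exact_mod_cast this
  have difference : (Nat.fib (a + 2 * b) : ℝ) - Nat.fib a = Nat.fib b * lucas (a + b) := by
    have := fib_add_two_mul_sub_neg_one_pow_mul_fib a b
    rw [hb.neg_one_pow, one_mul] at this
    exact_mod_cast this
  rw [arctan_div_sub_arctan_div _ (by simpa using ha) (by simp; omega), difference, ← catalan]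
  ring_nf

theorem Nat.tendsto_fib_atTop : Tendsto Nat.fib atTop atTop :=
  (tendsto_add_atTop_iff_nat 2).1 Nat.fib_add_two_strictMono.tendsto_atTop

theorem Antitone.hasSum_sub_succ {t : ℕ → ℝ} {l : ℝ} (ht : Antitone t)
    (hl : Tendsto t atTop (𝓝 l)) : HasSum (fun n ↦ t n - t (n + 1)) (t 0 - l) := by
  rw [hasSum_iff_tendsto_nat_of_nonneg fun n ↦ sub_nonneg.2 (ht n.le_succ)]
  simp_rw [Finset.sum_range_sub']
  exact tendsto_const_nhds.sub hl

theorem stmt8 (j k : ℕ) (hj : 1 ≤ j) :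
    HasSum (fun r : ℕ =>
        Real.arctan ((Nat.fib (2 * j) : ℝ) ^ 2 * (lucas (4 * j * (1 + r) + 2 * k) : ℝ) /
          (Nat.fib (4 * j * (1 + r) + 2 * k) : ℝ) ^ 2))
      (Real.arctan ((Nat.fib (2 * j) : ℝ) / (Nat.fib (2 * j + 2 * k) : ℝ))) := by
  set t : ℕ → ℝ := fun n ↦ arctan (Nat.fib (2 * j) / Nat.fib (4 * j * n + 2 * j + 2 * k))
  have telescope (r : ℕ) : t r - t (r + 1) = arctan (Nat.fib (2 * j) ^ 2 *
      lucas (4 * j * (1 + r) + 2 * k) / Nat.fib (4 * j * (1 + r) + 2 * k) ^ 2) := by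
    have h := arctan_fib_div_sub_arctan_fib_div (a := 4 * j * r + 2 * j + 2 * k) (b := 2 * j)
      (by omega) (by use 2 * j * r + j + k; ring) (even_two_mul j)
    rw [show 4 * j * (1 + r) + 2 * k = 4 * j * r + 2 * j + 2 * k + 2 * j by ring, ← h,
      show 4 * j * r + 2 * j + 2 * k + 2 * (2 * j) = 4 * j * (r + 1) + 2 * j + 2 * k by ring]
  have antitone : Antitone t := antitone_nat_of_succ_le fun r ↦ by
    rw [← sub_nonneg, telescope, arctan_nonneg]
    positivity
  have index_tendsto : Tendsto (fun n : ℕ ↦ 4 * j * n + 2 * j + 2 * k) atTop atTop :=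
    tendsto_atTop_mono (fun n ↦ show n ≤ _ by nlinarith) tendsto_id
  have limit : Tendsto t atTop (𝓝 0) := by
    simpa [t, Function.comp_def] using (continuous_arctan.tendsto 0).comp <|
      tendsto_const_nhds.div_atTop <| tendsto_natCast_atTop_atTop.comp <|
        Nat.tendsto_fib_atTop.comp index_tendsto
  simpa [telescope, t] using antitone.hasSum_sub_succ limit
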